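/- arXiv:2009.12962 — 3 statements merged into one kernel-verified Lean document; each statement's English description precedes it below -/
import Mathlib

section
/- Let N ≥ 1, s ∈ (0,1), and let Ω ⊂ ℝ^N be a bounded nonempty open set satisfying the measure density condition for small radii: there exists C_Ω > 0 such that |Ω ∩ B_ρ(x)| ≥ C_Ω ρ^N for all x ∈ Ω and all ρ ∈ (0,1]. Then there exists a constant C = C(Ω, s, N) > 0 such that for every v ∈ L²(Ω) with finite Gagliardo seminorm [v]_{s,Ω}, one has ‖v‖_{L²(Ω)}^{2 + 4s/N} ≤ C ‖v‖_{L¹(Ω)}^{4s/N} ( ‖v‖_{L²(Ω)}² + [v]_{s,Ω}² ). -/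
/-!
For `0 < ρ ≤ 1` and `x ∈ Ω`, the density condition gives
`CΩ ρ^N |v x| ≤ ∫_{Ω ∩ B_ρ(x)} |v x - v y| dy + ‖v‖₁`. By Cauchy–Schwarz on the ball and
`|x - y| ≤ ρ`, the square of the first term is at most `|B_ρ| ρ^{N+2s}` times the inner integral
of the Gagliardo seminorm. Multiplying by `|v x|`, integrating over `Ω` and absorbing half of
`‖v‖₂²` by Young's inequality yields `‖v‖₂² ≤ A ρ^{2s} [v]² + B ρ^{-N} ‖v‖₁²`.
The radius with `ρ^{N+2s} = ‖v‖₁² / (‖v‖₂² + [v]²)` balances the two terms; when this ratio is at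
least `1`, already `‖v‖₂² ≤ ‖v‖₁²` and the inequality is immediate.
-/

open MeasureTheory ENNReal

/-- The squared Gagliardo seminorm `[v]_{s,Ω}²` on an open set `Ω ⊆ ℝ^N`. -/
noncomputable def gagliardoSq {N : ℕ} (s : ℝ) (Ω : Set (EuclideanSpace ℝ (Fin N)))
    (v : EuclideanSpace ℝ (Fin N) → ℝ) : ℝ≥0∞ :=
  ∫⁻ x in Ω, ∫⁻ y in Ω, ENNReal.ofReal ((v x - v y) ^ 2 / ‖x - y‖ ^ ((N : ℝ) + 2 * s))

theorem ENNReal.mul_le_mul_sq_add_inv_mul_sq {c : ℝ≥0∞} (hc0 : c ≠ 0) (hct : c ≠ ∞)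
    (x y : ℝ≥0∞) : x * y ≤ c * x ^ 2 + c⁻¹ * y ^ 2 := by
  rcases le_total (c * x) y with h | h
  · have hx : x ≤ c⁻¹ * y := (ENNReal.mul_le_iff_le_inv hc0 hct).1 h
    calc x * y ≤ c⁻¹ * y * y := mul_le_mul_left hx y
      _ = c⁻¹ * y ^ 2 := by ring
      _ ≤ _ := le_add_self
  · calc x * y ≤ x * (c * x) := mul_le_mul_right h x
      _ = c * x ^ 2 := by ring
      _ ≤ _ := le_self_add

theorem MeasureTheory.sq_lintegral_le_measure_univ_mul {α : Type*} [MeasurableSpace α]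
    (μ : Measure α) {g : α → ℝ≥0∞} (hg : AEMeasurable g μ) :
    (∫⁻ y, g y ∂μ) ^ 2 ≤ μ Set.univ * ∫⁻ y, g y ^ 2 ∂μ := by
  have holder := ENNReal.lintegral_mul_le_Lp_mul_Lq μ Real.HolderConjugate.two_two
    (aemeasurable_const (b := (1 : ℝ≥0∞))) hg
  simp only [Pi.mul_apply, one_mul, lintegral_const, ENNReal.rpow_two, one_pow] at holder
  calc (∫⁻ y, g y ∂μ) ^ 2
      ≤ (μ Set.univ ^ (1 / 2 : ℝ) * (∫⁻ y, g y ^ 2 ∂μ) ^ (1 / 2 : ℝ)) ^ (2 : ℝ) := by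
        rw [ENNReal.rpow_two]; exact pow_le_pow_left' holder 2
    _ = μ Set.univ * ∫⁻ y, g y ^ 2 ∂μ := by
        rw [ENNReal.mul_rpow_of_nonneg _ _ zero_le_two, ← ENNReal.rpow_mul, ← ENNReal.rpow_mul]
        norm_num

theorem MeasureTheory.mul_lintegral_sq_le_of_ae_mul_le_add {α : Type*} [MeasurableSpace α]
    {μ : Measure α} {u I : α → ℝ≥0∞} {a c : ℝ≥0∞} (hu : AEMeasurable u μ) (ha0 : a ≠ 0)
    (hat : a ≠ ∞) (hu2 : ∫⁻ x, u x ^ 2 ∂μ ≠ ∞) (h : ∀ᵐ x ∂μ, 2 * a * u x ≤ I x + c) :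
    a * ∫⁻ x, u x ^ 2 ∂μ ≤ a⁻¹ * ∫⁻ x, I x ^ 2 ∂μ + c * ∫⁻ x, u x ∂μ := by
  have h2a : 2 * a ≠ ∞ := mul_ne_top ofNat_ne_top hat
  have hdouble : a * ∫⁻ x, u x ^ 2 ∂μ + a * ∫⁻ x, u x ^ 2 ∂μ ≤
      a * ∫⁻ x, u x ^ 2 ∂μ + (a⁻¹ * ∫⁻ x, I x ^ 2 ∂μ + c * ∫⁻ x, u x ∂μ) :=
    calc a * ∫⁻ x, u x ^ 2 ∂μ + a * ∫⁻ x, u x ^ 2 ∂μ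
        = ∫⁻ x, 2 * a * u x ^ 2 ∂μ := by rw [lintegral_const_mul' _ _ h2a]; ring
      _ ≤ ∫⁻ x, (u x * I x + u x * c) ∂μ := by
        refine lintegral_mono_ae (h.mono fun x hx => ?_)
        calc 2 * a * u x ^ 2 = u x * (2 * a * u x) := by ring
          _ ≤ u x * (I x + c) := mul_le_mul_right hx _
          _ = _ := mul_add _ _ _
      _ ≤ ∫⁻ x, (a * u x ^ 2 + a⁻¹ * I x ^ 2) ∂μ + ∫⁻ x, u x * c ∂μ := by
        rw [lintegral_add_right' _ (hu.mul_const c)]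
        gcongr with x
        exact ENNReal.mul_le_mul_sq_add_inv_mul_sq ha0 hat _ _
      _ = _ := by
        rw [lintegral_add_left' ((hu.pow_const 2).const_mul a), lintegral_const_mul' _ _ hat,
          lintegral_const_mul' _ _ (ENNReal.inv_ne_top.2 ha0), lintegral_mul_const'' _ hu]
        ring
  exact (ENNReal.add_le_add_iff_left (mul_ne_top hat hu2)).1 hdouble

theorem MeasureTheory.enorm_mul_measure_le_setLIntegral_enorm_sub_add {α E : Type*}
    [MeasurableSpace α] [NormedAddCommGroup E] [MeasurableSpace E] [OpensMeasurableSpace E]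
    {μ : Measure α} {f : α → E} (hf : AEMeasurable f μ) {s t : Set α} (hts : t ⊆ s) (c : E) :
    ‖c‖ₑ * μ t ≤ ∫⁻ y in t, ‖c - f y‖ₑ ∂μ + ∫⁻ y in s, ‖f y‖ₑ ∂μ :=
  calc ‖c‖ₑ * μ t = ∫⁻ _ in t, ‖c‖ₑ ∂μ := (setLIntegral_const t _).symm
    _ ≤ ∫⁻ y in t, (‖c - f y‖ₑ + ‖f y‖ₑ) ∂μ :=
      lintegral_mono fun y => by simpa using enorm_add_le (c - f y) (f y)
    _ = ∫⁻ y in t, ‖c - f y‖ₑ ∂μ + ∫⁻ y in t, ‖f y‖ₑ ∂μ :=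
      lintegral_add_right' _ hf.enorm.restrict
    _ ≤ _ := by gcongr

theorem enorm_sub_sq_le_ofReal_rpow_mul {E : Type*} [NormedAddCommGroup E] (v : E → ℝ)
    {x y : E} {ρ q : ℝ} (hq : 0 ≤ q) (hxy : ‖x - y‖ ≤ ρ) :
    ‖v x - v y‖ₑ ^ 2 ≤ ENNReal.ofReal (ρ ^ q) * ENNReal.ofReal ((v x - v y) ^ 2 / ‖x - y‖ ^ q) := by
  rcases eq_or_ne x y with rfl | hne
  · simp
  have hr : 0 < ‖x - y‖ ^ q := Real.rpow_pos_of_pos (norm_pos_iff.2 (sub_ne_zero.2 hne)) q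
  rw [Real.enorm_eq_ofReal_abs, ← ENNReal.ofReal_pow (abs_nonneg _), sq_abs,
    ← ENNReal.ofReal_mul (Real.rpow_nonneg ((norm_nonneg _).trans hxy) q)]
  refine ENNReal.ofReal_le_ofReal ?_
  calc (v x - v y) ^ 2 = ‖x - y‖ ^ q * ((v x - v y) ^ 2 / ‖x - y‖ ^ q) := by field_simp
    _ ≤ ρ ^ q * ((v x - v y) ^ 2 / ‖x - y‖ ^ q) := by gcongr

theorem MeasureTheory.sq_setLIntegral_ball_enorm_sub_le {E : Type*} [NormedAddCommGroup E]
    [MeasurableSpace E] [OpensMeasurableSpace E] (μ : Measure E) {Ω : Set E}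
    (hΩ : MeasurableSet Ω) {v : E → ℝ} (hv : Measurable v) {q : ℝ} (hq : 0 ≤ q) (x : E) (ρ : ℝ) :
    (∫⁻ y in Ω ∩ Metric.ball x ρ, ‖v x - v y‖ₑ ∂μ) ^ 2 ≤
      μ (Metric.ball x ρ) * ENNReal.ofReal (ρ ^ q) *
        ∫⁻ y in Ω, ENNReal.ofReal ((v x - v y) ^ 2 / ‖x - y‖ ^ q) ∂μ := by
  have hkernel : ∫⁻ y in Ω ∩ Metric.ball x ρ, ‖v x - v y‖ₑ ^ 2 ∂μ ≤
      ENNReal.ofReal (ρ ^ q) * ∫⁻ y in Ω, ENNReal.ofReal ((v x - v y) ^ 2 / ‖x - y‖ ^ q) ∂μ :=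
    calc ∫⁻ y in Ω ∩ Metric.ball x ρ, ‖v x - v y‖ₑ ^ 2 ∂μ
        ≤ ∫⁻ y in Ω ∩ Metric.ball x ρ,
            ENNReal.ofReal (ρ ^ q) * ENNReal.ofReal ((v x - v y) ^ 2 / ‖x - y‖ ^ q) ∂μ := by
          refine setLIntegral_mono' (hΩ.inter Metric.isOpen_ball.measurableSet) fun y hy => ?_
          refine enorm_sub_sq_le_ofReal_rpow_mul v hq ?_
          rw [← dist_eq_norm, dist_comm]
          exact (Metric.mem_ball.1 hy.2).le
      _ ≤ _ := by
          rw [lintegral_const_mul' _ _ ofReal_ne_top]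
          gcongr
          exact Set.inter_subset_left
  calc (∫⁻ y in Ω ∩ Metric.ball x ρ, ‖v x - v y‖ₑ ∂μ) ^ 2
      ≤ μ (Ω ∩ Metric.ball x ρ) * ∫⁻ y in Ω ∩ Metric.ball x ρ, ‖v x - v y‖ₑ ^ 2 ∂μ := by
        simpa only [Measure.restrict_apply_univ] using sq_lintegral_le_measure_univ_mul
          (μ.restrict (Ω ∩ Metric.ball x ρ)) (g := fun y => ‖v x - v y‖ₑ)
          (measurable_const.sub hv).enorm.aemeasurable
    _ ≤ μ (Metric.ball x ρ) * (ENNReal.ofReal (ρ ^ q) *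
          ∫⁻ y in Ω, ENNReal.ofReal ((v x - v y) ^ 2 / ‖x - y‖ ^ q) ∂μ) :=
        mul_le_mul' (measure_mono Set.inter_subset_right) hkernel
    _ = _ := (mul_assoc _ _ _).symm

theorem gagliardoSq_congr_ae {N : ℕ} {s : ℝ} {Ω : Set (EuclideanSpace ℝ (Fin N))}
    {v w : EuclideanSpace ℝ (Fin N) → ℝ} (h : v =ᵐ[volume.restrict Ω] w) :
    gagliardoSq s Ω v = gagliardoSq s Ω w :=
  lintegral_congr_ae <| h.mono fun x hx => lintegral_congr_ae <| h.mono fun y hy => by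
    simp only [hx, hy]

theorem mul_lintegral_enorm_sq_le_gagliardoSq_add {N : ℕ} {s ρ : ℝ} {a : ℝ≥0∞}
    {Ω : Set (EuclideanSpace ℝ (Fin N))} {v : EuclideanSpace ℝ (Fin N) → ℝ} (hs : 0 ≤ s)
    (hΩ : MeasurableSet Ω) (hρ : 0 < ρ) (ha0 : a ≠ 0) (hat : a ≠ ∞)
    (hdensity : ∀ x ∈ Ω, 2 * a ≤ volume (Ω ∩ Metric.ball x ρ))
    (hv : Measurable v) (hv2 : ∫⁻ x in Ω, ‖v x‖ₑ ^ 2 ≠ ∞) :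
    a * ∫⁻ x in Ω, ‖v x‖ₑ ^ 2 ≤
      a⁻¹ * (ENNReal.ofReal (ρ ^ N) * volume (Metric.ball (0 : EuclideanSpace ℝ (Fin N)) 1) *
        ENNReal.ofReal (ρ ^ ((N : ℝ) + 2 * s))) * gagliardoSq s Ω v +
          (∫⁻ x in Ω, ‖v x‖ₑ) ^ 2 := by
  set I := fun x => ∫⁻ y in Ω ∩ Metric.ball x ρ, ‖v x - v y‖ₑ
  have hpointwise : ∀ᵐ x ∂volume.restrict Ω, 2 * a * ‖v x‖ₑ ≤ I x + ∫⁻ x in Ω, ‖v x‖ₑ :=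
    ae_restrict_of_forall_mem hΩ fun x hx =>
      calc 2 * a * ‖v x‖ₑ ≤ ‖v x‖ₑ * volume (Ω ∩ Metric.ball x ρ) := by
            rw [mul_comm]; exact mul_le_mul_right (hdensity x hx) _
        _ ≤ _ := enorm_mul_measure_le_setLIntegral_enorm_sub_add hv.aemeasurable
            Set.inter_subset_left (v x)
  have hI : ∫⁻ x in Ω, I x ^ 2 ≤
      ENNReal.ofReal (ρ ^ N) * volume (Metric.ball (0 : EuclideanSpace ℝ (Fin N)) 1) *
        ENNReal.ofReal (ρ ^ ((N : ℝ) + 2 * s)) * gagliardoSq s Ω v := by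
    rw [gagliardoSq, ← lintegral_const_mul' _ _
      (mul_ne_top (mul_ne_top ofReal_ne_top measure_ball_lt_top.ne) ofReal_ne_top)]
    refine lintegral_mono fun x => ?_
    have := sq_setLIntegral_ball_enorm_sub_le volume hΩ hv
      (by positivity : 0 ≤ (N : ℝ) + 2 * s) x ρ
    rwa [Measure.addHaar_ball_of_pos volume x hρ, finrank_euclideanSpace_fin] at this
  calc a * ∫⁻ x in Ω, ‖v x‖ₑ ^ 2
      ≤ a⁻¹ * (∫⁻ x in Ω, I x ^ 2) + (∫⁻ x in Ω, ‖v x‖ₑ) * ∫⁻ x in Ω, ‖v x‖ₑ :=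
        mul_lintegral_sq_le_of_ae_mul_le_add hv.enorm.aemeasurable ha0 hat hv2 hpointwise
    _ ≤ _ := by rw [← sq, mul_assoc _ _ (gagliardoSq s Ω v)]; gcongr

theorem rpow_eLpNorm_two_le_of_measure_inter_ball_ge {N : ℕ} {s CΩ ρ : ℝ}
    {Ω : Set (EuclideanSpace ℝ (Fin N))} {v : EuclideanSpace ℝ (Fin N) → ℝ} (hs : 0 ≤ s)
    (hΩ : MeasurableSet Ω) (hCΩ : 0 < CΩ) (hρ : 0 < ρ)
    (hdensity : ∀ x ∈ Ω, ENNReal.ofReal (CΩ * ρ ^ N) ≤ volume (Ω ∩ Metric.ball x ρ))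
    (hv : Measurable v) (hv2 : eLpNorm v 2 (volume.restrict Ω) ≠ ∞) :
    eLpNorm v 2 (volume.restrict Ω) ^ (2 : ℝ) ≤
      ENNReal.ofReal (4 * (volume (Metric.ball (0 : EuclideanSpace ℝ (Fin N)) 1)).toReal /
          CΩ ^ 2 * ρ ^ (2 * s)) * gagliardoSq s Ω v +
        ENNReal.ofReal (2 / CΩ * ρ ^ (-(N : ℝ))) * eLpNorm v 1 (volume.restrict Ω) ^ (2 : ℝ) := by
  set vB := volume (Metric.ball (0 : EuclideanSpace ℝ (Fin N)) 1)
  set a := ENNReal.ofReal (CΩ * ρ ^ N / 2)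
  have ha : 0 < CΩ * ρ ^ N / 2 := by positivity
  have hX : eLpNorm v 2 (volume.restrict Ω) ^ (2 : ℝ) = ∫⁻ x in Ω, ‖v x‖ₑ ^ 2 := by
    simpa [ENNReal.rpow_two] using
      eLpNorm_nnreal_pow_eq_lintegral (f := v) (μ := volume.restrict Ω) (p := 2) two_ne_zero
  have h2a : 2 * a = ENNReal.ofReal (CΩ * ρ ^ N) := by
    rw [← ofReal_ofNat, ← ofReal_mul zero_le_two]; ring_nf
  have haX := mul_lintegral_enorm_sq_le_gagliardoSq_add hs hΩ hρ (ofReal_pos.2 ha).ne'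
    ofReal_ne_top (h2a ▸ hdensity) hv (hX ▸ rpow_ne_top_of_nonneg zero_le_two hv2)
  have hainv : a⁻¹ = ENNReal.ofReal (2 / CΩ * ρ ^ (-(N : ℝ))) := by
    rw [← ofReal_inv_of_pos ha, Real.rpow_neg hρ.le, Real.rpow_natCast]
    congr 1
    field_simp
  have hcoeff : a⁻¹ * a⁻¹ * (ENNReal.ofReal (ρ ^ N) * vB *
      ENNReal.ofReal (ρ ^ ((N : ℝ) + 2 * s))) =
        ENNReal.ofReal (4 * vB.toReal / CΩ ^ 2 * ρ ^ (2 * s)) := by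
    have hvB : vB = ENNReal.ofReal vB.toReal := (ofReal_toReal measure_ball_lt_top.ne).symm
    nth_rw 1 [hvB]
    rw [hainv, ← ofReal_mul (by positivity), ← ofReal_mul (by positivity),
      ← ofReal_mul (by positivity), ← ofReal_mul (by positivity)]
    congr 1
    rw [Real.rpow_add hρ, Real.rpow_natCast, Real.rpow_neg hρ.le, Real.rpow_natCast]
    field_simp
    ring
  rw [hX, eLpNorm_one_eq_lintegral_enorm, ENNReal.rpow_two, ← hcoeff, ← hainv]
  calc ∫⁻ x in Ω, ‖v x‖ₑ ^ 2 = a⁻¹ * (a * ∫⁻ x in Ω, ‖v x‖ₑ ^ 2) := by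
        rw [← mul_assoc, ENNReal.inv_mul_cancel (ofReal_pos.2 ha).ne' ofReal_ne_top, one_mul]
    _ ≤ a⁻¹ * (a⁻¹ * (ENNReal.ofReal (ρ ^ N) * vB * ENNReal.ofReal (ρ ^ ((N : ℝ) + 2 * s))) *
          gagliardoSq s Ω v + (∫⁻ x in Ω, ‖v x‖ₑ) ^ 2) := by gcongr
    _ = _ := by ring

theorem Real.rpow_le_of_forall_le_mul_rpow_add {α β A B x e m : ℝ} (hα : 0 < α) (hβ : 0 < β)
    (hA : 0 ≤ A) (hB : 0 ≤ B) (hx : 0 ≤ x) (hxe : x ≤ e) (hm : 0 < m)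
    (h : ∀ ρ : ℝ, 0 < ρ → ρ ≤ 1 → x ≤ A * ρ ^ α * e + B * ρ ^ (-β) * m) :
    x ^ ((α + β) / β) ≤ max 1 ((A + B) ^ ((α + β) / β)) * m ^ (α / β) * e := by
  have he : 0 ≤ e := hx.trans hxe
  have hγ : (α + β) / β = 1 + α / β := by field_simp; ring
  rcases le_or_gt e m with hem | hme
  · calc x ^ ((α + β) / β) = x * x ^ (α / β) := by
          rw [hγ, Real.rpow_add' hx (by positivity), Real.rpow_one]
      _ ≤ e * m ^ (α / β) := by gcongr; exact hxe.trans hem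
      _ ≤ max 1 ((A + B) ^ ((α + β) / β)) * m ^ (α / β) * e := by
          rw [mul_comm e]
          gcongr
          exact le_mul_of_one_le_left (by positivity) (le_max_left _ _)
  set ρ := (m / e) ^ (α + β)⁻¹
  have he0 : 0 < e := hm.trans hme
  have hρ0 : 0 < ρ := by positivity
  have hρ : ρ ^ (α + β) = m / e := by
    rw [← Real.rpow_mul (by positivity), inv_mul_cancel₀ (by positivity), Real.rpow_one]
  have hbalance : ρ ^ (-β) * m = ρ ^ α * e := by
    rw [← div_mul_cancel₀ m he0.ne', ← hρ, ← mul_assoc, ← Real.rpow_add hρ0]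
    ring_nf
  have hx' : x ≤ (A + B) * (ρ ^ α * e) := by
    have := h ρ hρ0 (Real.rpow_le_one (by positivity) ((div_le_one he0).2 hme.le) (by positivity))
    rw [mul_assoc, mul_assoc, hbalance] at this
    linarith
  calc x ^ ((α + β) / β) ≤ ((A + B) * (ρ ^ α * e)) ^ ((α + β) / β) := by gcongr
    _ = (A + B) ^ ((α + β) / β) * m ^ (α / β) * e := by
      rw [Real.mul_rpow (by positivity) (by positivity), Real.mul_rpow (by positivity) he,
        ← Real.rpow_mul hρ0.le, hγ, Real.rpow_add' he (by positivity), Real.rpow_one]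
      have : ρ ^ (α * (1 + α / β)) = (m / e) ^ (α / β) := by
        rw [← hρ, ← Real.rpow_mul hρ0.le]; congr 1; field_simp; ring
      rw [this, Real.div_rpow hm.le he]
      field_simp
    _ ≤ max 1 ((A + B) ^ ((α + β) / β)) * m ^ (α / β) * e := by
      gcongr; exact le_max_right _ _

theorem ENNReal.rpow_le_of_forall_le_mul_rpow_add {α β A B : ℝ} (hα : 0 < α) (hβ : 0 < β)
    (hA : 0 ≤ A) (hB : 0 ≤ B) {X E M : ℝ≥0∞} (hXE : X ≤ E) (hE : E ≠ ∞) (hM : M ≠ 0)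
    (h : ∀ ρ : ℝ, 0 < ρ → ρ ≤ 1 →
      X ≤ ENNReal.ofReal (A * ρ ^ α) * E + ENNReal.ofReal (B * ρ ^ (-β)) * M) :
    X ^ ((α + β) / β) ≤ ENNReal.ofReal (max 1 ((A + B) ^ ((α + β) / β))) * M ^ (α / β) * E := by
  have hγ : 0 < (α + β) / β := by positivity
  rcases eq_or_ne M ∞ with rfl | hMt
  · rcases eq_or_ne E 0 with rfl | hE0
    · rw [nonpos_iff_eq_zero.1 hXE, zero_rpow_of_pos hγ]
      exact bot_le
    · rw [top_rpow_of_pos (by positivity), mul_top (by simp), top_mul hE0]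
      exact le_top
  have hX : X ≠ ∞ := ne_top_of_le_ne_top hE hXE
  have key := Real.rpow_le_of_forall_le_mul_rpow_add hα hβ hA hB toReal_nonneg (toReal_mono hE hXE)
    (toReal_pos hM hMt) fun ρ hρ0 hρ1 => by
      have := toReal_mono (by finiteness) (h ρ hρ0 hρ1)
      rwa [toReal_add (by finiteness) (by finiteness), toReal_mul, toReal_mul,
        toReal_ofReal (by positivity), toReal_ofReal (by positivity)] at this
  rw [← ofReal_toReal hX, ← ofReal_toReal hE, ← ofReal_toReal hMt,
    ofReal_rpow_of_nonneg toReal_nonneg hγ.le, ofReal_rpow_of_nonneg toReal_nonneg (by positivity),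
    ← ofReal_mul (by positivity), ← ofReal_mul (by positivity)]
  exact ofReal_le_ofReal key

theorem nash_bounded_domain_general (N : ℕ) (hN : 1 ≤ N) (s : ℝ) (hs : s ∈ Set.Ioo (0 : ℝ) 1)
    (Ω : Set (EuclideanSpace ℝ (Fin N))) (hΩopen : IsOpen Ω)
    (CΩ : ℝ) (hCΩ : 0 < CΩ)
    (hdensity : ∀ x ∈ Ω, ∀ ρ : ℝ, 0 < ρ → ρ ≤ 1 →
      ENNReal.ofReal (CΩ * ρ ^ N) ≤ volume (Ω ∩ Metric.ball x ρ)) :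
    ∃ C : ℝ, 0 < C ∧ ∀ v : EuclideanSpace ℝ (Fin N) → ℝ,
      MemLp v 2 (volume.restrict Ω) → gagliardoSq s Ω v ≠ ⊤ →
      eLpNorm v 2 (volume.restrict Ω) ^ (2 + 4 * s / (N : ℝ)) ≤
        ENNReal.ofReal C * eLpNorm v 1 (volume.restrict Ω) ^ (4 * s / (N : ℝ)) *
          (eLpNorm v 2 (volume.restrict Ω) ^ (2 : ℝ) + gagliardoSq s Ω v) := by
  have hN0 : (0 : ℝ) < N := by exact_mod_cast hN
  set A := 4 * (volume (Metric.ball (0 : EuclideanSpace ℝ (Fin N)) 1)).toReal / CΩ ^ 2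
  refine ⟨max 1 ((A + 2 / CΩ) ^ ((2 * s + N) / N)), zero_lt_one.trans_le (le_max_left _ _),
    fun v hv hG => ?_⟩
  obtain ⟨w, hw, hvw⟩ : ∃ w, Measurable w ∧ v =ᵐ[volume.restrict Ω] w :=
    ⟨hv.1.mk v, hv.1.stronglyMeasurable_mk.measurable, hv.1.ae_eq_mk⟩
  have hw2 : eLpNorm w 2 (volume.restrict Ω) ≠ ⊤ := eLpNorm_congr_ae hvw ▸ hv.2.ne
  rw [gagliardoSq_congr_ae hvw] at hG ⊢
  rw [eLpNorm_congr_ae hvw, eLpNorm_congr_ae hvw]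
  by_cases hL : eLpNorm w 1 (volume.restrict Ω) = 0
  · have hw0 : eLpNorm w 2 (volume.restrict Ω) = 0 := by
      rw [eLpNorm_eq_zero_iff hw.aestronglyMeasurable one_ne_zero] at hL
      rw [eLpNorm_congr_ae hL, eLpNorm_zero]
    rw [hw0, zero_rpow_of_pos (by have := hs.1; positivity)]
    exact bot_le
  calc eLpNorm w 2 (volume.restrict Ω) ^ (2 + 4 * s / (N : ℝ))
      = (eLpNorm w 2 (volume.restrict Ω) ^ (2 : ℝ)) ^ ((2 * s + N) / N) := by
        rw [← ENNReal.rpow_mul]; congr 1; field_simp; ring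
    _ ≤ ENNReal.ofReal (max 1 ((A + 2 / CΩ) ^ ((2 * s + N) / N))) *
          (eLpNorm w 1 (volume.restrict Ω) ^ (2 : ℝ)) ^ (2 * s / N) *
          (eLpNorm w 2 (volume.restrict Ω) ^ (2 : ℝ) + gagliardoSq s Ω w) := by
        refine ENNReal.rpow_le_of_forall_le_mul_rpow_add (by linarith [hs.1]) hN0 (by positivity)
          (by positivity) le_self_add (add_ne_top.2 ⟨rpow_ne_top_of_nonneg zero_le_two hw2, hG⟩)
          (by simpa using hL) fun ρ hρ0 hρ1 => ?_
        refine (rpow_eLpNorm_two_le_of_measure_inter_ball_ge hs.1.le hΩopen.measurableSet hCΩ hρ0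
          (fun x hx => hdensity x hx ρ hρ0 hρ1) hw hw2).trans ?_
        gcongr
        exact le_add_self
    _ = _ := by rw [← ENNReal.rpow_mul]; congr 3; ring

/-- Nash-type inequality on a bounded domain satisfying the measure density condition
for small radii. -/
theorem nash_bounded_domain (N : ℕ) (hN : 1 ≤ N) (s : ℝ) (hs : s ∈ Set.Ioo (0 : ℝ) 1)
    (Ω : Set (EuclideanSpace ℝ (Fin N))) (hne : Ω.Nonempty) (hΩopen : IsOpen Ω)
    (hbdd : Bornology.IsBounded Ω)
    (CΩ : ℝ) (hCΩ : 0 < CΩ)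
    (hdensity : ∀ x ∈ Ω, ∀ ρ : ℝ, 0 < ρ → ρ ≤ 1 →
      ENNReal.ofReal (CΩ * ρ ^ N) ≤ volume (Ω ∩ Metric.ball x ρ)) :
    ∃ C : ℝ, 0 < C ∧ ∀ v : EuclideanSpace ℝ (Fin N) → ℝ,
      MemLp v 2 (volume.restrict Ω) → gagliardoSq s Ω v ≠ ⊤ →
      eLpNorm v 2 (volume.restrict Ω) ^ (2 + 4 * s / (N : ℝ)) ≤
        ENNReal.ofReal C * eLpNorm v 1 (volume.restrict Ω) ^ (4 * s / (N : ℝ)) *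
          (eLpNorm v 2 (volume.restrict Ω) ^ (2 : ℝ) + gagliardoSq s Ω v) :=
  nash_bounded_domain_general N hN s hs Ω hΩopen CΩ hCΩ hdensity
end

section
/- Let N ≥ 2, r, s, c ∈ (0,1), α_s, α_r, α_c > 0, and set α = min{r, s}. Let Ω_s ⊂ ℝ^N be a bounded nonempty open set satisfying the measure density condition for ρ ∈ (0,1] (there exists C_{Ω_s} > 0 with |Ω_s ∩ B_ρ(x)| ≥ C_{Ω_s} ρ^N for all x ∈ Ω_s, ρ ∈ (0,1]), and let Ω_r = ℝ^N ∖ closure(Ω_s) satisfy the measure density condition for all ρ > 0. Then there exists C = C(Ω_r, Ω_s, r, s, c, N, α_s, α_r, α_c) > 0 such that for every v ∈ L¹(ℝ^N) ∩ L²(ℝ^N) with Q(v) < ∞, one has ‖v‖_{L²(ℝ^N)}^{2 + 4α/N} ≤ C ‖v‖_{L¹(ℝ^N)}^{4α/N} ( ‖v‖_{L²(ℝ^N)}² + Q(v) ). -/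
/-!
Nash's argument. If `Ω` has the measure density property at scale `ρ`, then averaging
`v(x)² ≤ (v(x) - v(y))² + 2 |v(x)| |v(y)|` over `y ∈ Ω ∩ B_ρ(x)` and integrating over `x ∈ Ω`
gives `C ρ^N ‖v‖²_{L²(Ω)} ≤ ρ^{N+2σ} [v]²_{σ,Ω} + 2 ‖v‖²_{L¹}`. The density property of `Ω_s`
forbids density-zero points of `Ω_s` on `∂Ω_s`, so by Lebesgue's density theorem `∂Ω_s` is
null and `ℝ^N = Ω_s ∪ Ω_r` up to a null set. Adding the two local estimates gives
`‖v‖₂² ≤ A ρ^{2α} Q(v) + B ‖v‖₁² / ρ^N` for every `ρ ≤ 1`, and the choice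
`ρ^N = min (1, 2B ‖v‖₁² / ‖v‖₂²)` yields the inequality.
-/

open MeasureTheory ENNReal

/-- The cross (coupling) term between the two domains. -/
noncomputable def crossTerm {N : ℕ} (c : ℝ) (Ωs Ωr : Set (EuclideanSpace ℝ (Fin N)))
    (v : EuclideanSpace ℝ (Fin N) → ℝ) : ℝ≥0∞ :=
  ∫⁻ x in Ωs, ∫⁻ y in Ωr, ENNReal.ofReal ((v x - v y) ^ 2 / ‖x - y‖ ^ ((N : ℝ) + 2 * c))

/-- The energy form `Q` of the coupled nonlocal problem. -/
noncomputable def energyQ {N : ℕ} (r s c αs αr αc : ℝ)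
    (Ωs Ωr : Set (EuclideanSpace ℝ (Fin N))) (v : EuclideanSpace ℝ (Fin N) → ℝ) : ℝ≥0∞ :=
  ENNReal.ofReal (αs / 4) * gagliardoSq s Ωs v + ENNReal.ofReal (αr / 4) * gagliardoSq r Ωr v +
    ENNReal.ofReal (αc / 2) * crossTerm c Ωs Ωr v

open Metric Filter Topology Module

theorem Real.rpow_one_add_le_of_forall_scale {n β A B m l q : ℝ} (hn : 0 < n) (hβ : 0 < β)
    (hB : 0 < B) (hm : 0 ≤ m) (hl : 0 < l) (hq : 0 ≤ q)
    (h : ∀ ρ : ℝ, 0 < ρ → ρ ≤ 1 → m ≤ A * ρ ^ β * q + B * l / ρ ^ n) :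
    m ^ (1 + β / n) ≤ (2 * B * l) ^ (β / n) * (max 1 (2 * A) * (m + q)) := by
  set θ := β / n
  have hθ : 0 < θ := div_pos hβ hn
  rw [Real.rpow_one_add' hm (by positivity)]
  have hmq : m ≤ max 1 (2 * A) * (m + q) := by nlinarith [le_max_left 1 (2 * A)]
  rcases le_or_gt m (2 * B * l) with hsmall | hbig
  · calc m * m ^ θ ≤ max 1 (2 * A) * (m + q) * (2 * B * l) ^ θ :=
          mul_le_mul hmq (Real.rpow_le_rpow hm hsmall hθ.le) (by positivity) (by positivity)
      _ = _ := mul_comm _ _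
  -- choose the scale `ρ` with `B * l / ρ ^ n = m / 2`
  set x := 2 * B * l / m with hx
  have hm0 : 0 < m := lt_trans (by positivity) hbig
  have hx0 : 0 < x := by positivity
  have hx1 : x < 1 := (div_lt_one hm0).2 hbig
  have hρn : (x ^ n⁻¹) ^ n = x := by
    rw [← Real.rpow_mul hx0.le, inv_mul_cancel₀ hn.ne', Real.rpow_one]
  have hρβ : (x ^ n⁻¹) ^ β = x ^ θ := by rw [← Real.rpow_mul hx0.le, inv_mul_eq_div]
  have hscale := h (x ^ n⁻¹) (by positivity) (Real.rpow_le_one hx0.le hx1.le (by positivity))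
  rw [hρn, hρβ, show B * l / x = m / 2 by rw [hx]; field_simp] at hscale
  have hmx : m ^ θ * x ^ θ = (2 * B * l) ^ θ := by
    rw [← Real.mul_rpow hm hx0.le, mul_div_cancel₀ _ hm0.ne']
  calc m * m ^ θ ≤ 2 * A * x ^ θ * q * m ^ θ :=
        mul_le_mul_of_nonneg_right (by linarith) (by positivity)
    _ = (2 * B * l) ^ θ * (2 * A * q) := by rw [← hmx]; ring
    _ ≤ (2 * B * l) ^ θ * (max 1 (2 * A) * (m + q)) := by
        gcongr
        · exact le_max_right _ _
        · linarith

theorem ENNReal.rpow_one_add_le_of_forall_scale {n β c A B : ℝ} (hn : 0 < n) (hβ : 0 < β)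
    (hc : 0 < c) (hA : 0 ≤ A) (hB : 0 < B) {M L Q : ℝ≥0∞} (hM : M ≠ ⊤) (hL : L ≠ ⊤)
    (hL0 : L ≠ 0) (hQ : Q ≠ ⊤)
    (h : ∀ ρ : ℝ, 0 < ρ → ρ ≤ 1 →
      ENNReal.ofReal (c * ρ ^ n) * M ≤
        ENNReal.ofReal (A * ρ ^ (n + β)) * Q + ENNReal.ofReal B * L) :
    M ^ (1 + β / n) ≤
      ENNReal.ofReal ((2 * B / c) ^ (β / n) * max 1 (2 * A / c)) * L ^ (β / n) * (M + Q) := by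
  obtain ⟨m, hm, rfl⟩ : ∃ m, 0 ≤ m ∧ M = ENNReal.ofReal m :=
    ⟨_, toReal_nonneg, (ofReal_toReal hM).symm⟩
  obtain ⟨q, hq, rfl⟩ : ∃ q, 0 ≤ q ∧ Q = ENNReal.ofReal q :=
    ⟨_, toReal_nonneg, (ofReal_toReal hQ).symm⟩
  obtain ⟨l, hl, rfl⟩ : ∃ l, 0 < l ∧ L = ENNReal.ofReal l :=
    ⟨_, toReal_pos hL0 hL, (ofReal_toReal hL).symm⟩
  have hreal := Real.rpow_one_add_le_of_forall_scale hn hβ (A := A / c) (B := B / c)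
    (by positivity) hm hl hq fun ρ hρ hρ1 => by
      have := h ρ hρ hρ1
      rw [← ofReal_mul (by positivity), ← ofReal_mul (by positivity), ← ofReal_mul hB.le,
        ← ofReal_add (by positivity) (by positivity),
        ofReal_le_ofReal_iff (by positivity), Real.rpow_add hρ] at this
      rw [show A / c * ρ ^ β * q + B / c * l / ρ ^ n
          = (A * (ρ ^ n * ρ ^ β) * q + B * l) / (c * ρ ^ n) by field_simp,
        le_div_iff₀ (by positivity)]
      linarith
  rw [ofReal_rpow_of_nonneg hm (by positivity), ofReal_rpow_of_nonneg hl.le (by positivity),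
    ← ofReal_add hm hq, ← ofReal_mul (by positivity), ← ofReal_mul (by positivity)]
  refine ofReal_le_ofReal (hreal.trans_eq ?_)
  rw [Real.mul_rpow (by positivity) hl.le]
  ring_nf

theorem le_ofReal_inv_mul_of_ofReal_mul_le {a : ℝ} (ha : 0 < a) {x y : ℝ≥0∞}
    (h : ENNReal.ofReal a * x ≤ y) : x ≤ ENNReal.ofReal a⁻¹ * y :=
  calc x = ENNReal.ofReal a⁻¹ * (ENNReal.ofReal a * x) := by
        rw [← mul_assoc, ← ofReal_mul (inv_nonneg.2 ha.le), inv_mul_cancel₀ ha.ne', ofReal_one,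
          one_mul]
    _ ≤ ENNReal.ofReal a⁻¹ * y := by gcongr

theorem measure_closure_diff_eq_zero_of_density {E : Type*} [NormedAddCommGroup E]
    [NormedSpace ℝ E] [FiniteDimensional ℝ E] [MeasurableSpace E] [BorelSpace E]
    (μ : Measure E) [μ.IsAddHaarMeasure] {s : Set E} (hs : MeasurableSet s) {K : ℝ} (hK : 0 < K)
    (hdens : ∀ x ∈ s, ∀ ρ : ℝ, 0 < ρ → ρ ≤ 1 →
      ENNReal.ofReal (K * ρ ^ finrank ℝ E) ≤ μ (s ∩ ball x ρ)) :
    μ (closure s \ s) = 0 := by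
  set c := ENNReal.ofReal (K / 2 ^ finrank ℝ E) / μ (ball 0 1)
  have hc : 0 < c := ENNReal.div_pos (ofReal_pos.2 (by positivity)).ne' measure_ball_lt_top.ne
  refine measure_mono_null ?_
    (ae_iff.1 (Besicovitch.ae_tendsto_measure_inter_div_of_measurableSet μ hs))
  rintro x ⟨hx_cl, hx_s⟩ htend
  rw [Set.indicator_of_notMem hx_s] at htend
  -- near a point of `closure s`, `s` fills a fixed proportion of every small ball
  have hlow : ∀ᶠ r in 𝓝[>] 0, c ≤ μ (s ∩ closedBall x r) / μ (closedBall x r) := by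
    filter_upwards [Ioc_mem_nhdsGT one_pos] with r ⟨hr0, hr1⟩
    obtain ⟨y, hy, hxy⟩ := mem_closure_iff.1 hx_cl (r / 2) (half_pos hr0)
    have hball : ball y (r / 2) ⊆ closedBall x r := fun z hz => by
      rw [mem_ball] at hz; rw [mem_closedBall]
      linarith [dist_triangle z y x, dist_comm x y]
    calc c = ENNReal.ofReal (K * (r / 2) ^ finrank ℝ E) / μ (closedBall x r) := by
          rw [Measure.addHaar_closedBall μ x hr0.le,
            show K * (r / 2) ^ finrank ℝ E = K / 2 ^ finrank ℝ E * r ^ finrank ℝ E by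
              rw [div_pow]; ring,
            ofReal_mul (by positivity), mul_comm (ENNReal.ofReal (r ^ finrank ℝ E)),
            ENNReal.mul_div_mul_right _ _ (ofReal_pos.2 (by positivity)).ne' ofReal_ne_top]
      _ ≤ μ (s ∩ ball y (r / 2)) / μ (closedBall x r) := by
          gcongr; exact hdens y hy _ (half_pos hr0) (by linarith)
      _ ≤ μ (s ∩ closedBall x r) / μ (closedBall x r) := by
          gcongr
  exact hc.ne' (le_zero_iff.1 (ge_of_tendsto htend hlow))

theorem lintegral_eq_setLIntegral_add_compl_closure {E : Type*} [TopologicalSpace E]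
    [MeasurableSpace E] [OpensMeasurableSpace E] {μ : Measure E} {s : Set E}
    (hs : μ (closure s \ s) = 0) (f : E → ℝ≥0∞) :
    ∫⁻ x, f x ∂μ = ∫⁻ x in s, f x ∂μ + ∫⁻ x in (closure s)ᶜ, f x ∂μ := by
  have hae : closure s =ᵐ[μ] s := ae_eq_set.2 ⟨hs, by simp [Set.sdiff_eq_empty.2 subset_closure]⟩
  rw [← lintegral_add_compl f isClosed_closure.measurableSet, setLIntegral_congr hae]

theorem eLpNorm_two_rpow_two {α : Type*} [MeasurableSpace α] {μ : Measure α} (v : α → ℝ) :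
    eLpNorm v 2 μ ^ (2 : ℝ) = ∫⁻ x, ENNReal.ofReal (v x ^ 2) ∂μ := by
  have := eLpNorm_nnreal_pow_eq_lintegral (f := v) (μ := μ) (p := 2) two_ne_zero
  simp only [NNReal.coe_ofNat, ENNReal.coe_ofNat] at this
  rw [this]
  congr with x
  rw [ENNReal.rpow_two, Real.enorm_eq_ofReal_abs, ← ofReal_pow (abs_nonneg _), sq_abs]

theorem ofReal_sq_le_kernel_add {E : Type*} [NormedAddCommGroup E] (v : E → ℝ) {x y : E}
    {ρ e : ℝ} (he : 0 ≤ e) (hxy : dist y x < ρ) :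
    ENNReal.ofReal (v x ^ 2) ≤ ENNReal.ofReal (ρ ^ e) *
      ENNReal.ofReal ((v x - v y) ^ 2 / ‖x - y‖ ^ e) + 2 * ‖v x‖ₑ * ‖v y‖ₑ := by
  have hρ : 0 < ρ := dist_nonneg.trans_lt hxy
  have hdiff : (v x - v y) ^ 2 ≤ ρ ^ e * ((v x - v y) ^ 2 / ‖x - y‖ ^ e) := by
    rcases eq_or_ne x y with rfl | hne
    · simp
    have hd : 0 < ‖x - y‖ := norm_pos_iff.2 (sub_ne_zero.2 hne)
    rw [mul_div_assoc', le_div_iff₀ (by positivity), mul_comm]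
    gcongr
    rw [← dist_eq_norm, dist_comm]
    exact hxy.le
  -- `a² = (a - b)² + b (2a - b) ≤ (a - b)² + 2|a||b|`
  have hsq : v x ^ 2 ≤ (v x - v y) ^ 2 + 2 * |v x| * |v y| := by
    nlinarith [abs_mul (v x) (v y), le_abs_self (v x * v y), sq_nonneg (v y)]
  rw [Real.enorm_eq_ofReal_abs, Real.enorm_eq_ofReal_abs, ← ofReal_ofNat 2,
    ← ofReal_mul (by positivity), ← ofReal_mul (by positivity), ← ofReal_mul (by positivity),
    ← ofReal_add (by positivity) (by positivity)]
  exact ofReal_le_ofReal (by linarith)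

theorem mul_setLIntegral_sq_le_gagliardoSq {N : ℕ} {Ω : Set (EuclideanSpace ℝ (Fin N))}
    (hΩ : MeasurableSet Ω) {σ ρ : ℝ} (hσ : 0 ≤ σ) {K : ℝ≥0∞}
    (hK : ∀ x ∈ Ω, K ≤ volume (Ω ∩ ball x ρ)) {v : EuclideanSpace ℝ (Fin N) → ℝ}
    (hv : AEMeasurable v) :
    K * ∫⁻ x in Ω, ENNReal.ofReal (v x ^ 2) ≤
      ENNReal.ofReal (ρ ^ ((N : ℝ) + 2 * σ)) * gagliardoSq σ Ω v + 2 * eLpNorm v 1 volume ^ 2 := by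
  have hL : ∫⁻ y in Ω, ‖v y‖ₑ ≤ eLpNorm v 1 volume := by
    rw [eLpNorm_one_eq_lintegral_enorm]; exact setLIntegral_le_lintegral _ _
  set e : ℝ := N + 2 * σ
  set L := eLpNorm v 1 volume
  have hpt : ∀ x ∈ Ω, K * ENNReal.ofReal (v x ^ 2) ≤ ENNReal.ofReal (ρ ^ e) *
      (∫⁻ y in Ω, ENNReal.ofReal ((v x - v y) ^ 2 / ‖x - y‖ ^ e)) + 2 * ‖v x‖ₑ * L := by
    intro x hx
    calc K * ENNReal.ofReal (v x ^ 2) ≤ volume (Ω ∩ ball x ρ) * ENNReal.ofReal (v x ^ 2) := by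
          gcongr; exact hK x hx
      _ = ∫⁻ _ in Ω ∩ ball x ρ, ENNReal.ofReal (v x ^ 2) := by rw [setLIntegral_const, mul_comm]
      _ ≤ ∫⁻ y in Ω ∩ ball x ρ, (ENNReal.ofReal (ρ ^ e) *
            ENNReal.ofReal ((v x - v y) ^ 2 / ‖x - y‖ ^ e) + 2 * ‖v x‖ₑ * ‖v y‖ₑ) :=
          setLIntegral_mono' (hΩ.inter measurableSet_ball) fun y hy =>
            ofReal_sq_le_kernel_add v (by positivity) hy.2
      _ ≤ ∫⁻ y in Ω, (ENNReal.ofReal (ρ ^ e) *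
            ENNReal.ofReal ((v x - v y) ^ 2 / ‖x - y‖ ^ e) + 2 * ‖v x‖ₑ * ‖v y‖ₑ) :=
          lintegral_mono_set Set.inter_subset_left
      _ ≤ _ := by
          rw [lintegral_add_right' _ (hv.enorm.const_mul _).restrict,
            lintegral_const_mul' _ _ ofReal_ne_top, lintegral_const_mul'' _ hv.enorm.restrict]
          gcongr
  calc K * ∫⁻ x in Ω, ENNReal.ofReal (v x ^ 2)
      = ∫⁻ x in Ω, K * ENNReal.ofReal (v x ^ 2) :=
        (lintegral_const_mul'' _ (hv.pow_const 2).ennreal_ofReal.restrict).symm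
    _ ≤ ∫⁻ x in Ω, (ENNReal.ofReal (ρ ^ e) *
          (∫⁻ y in Ω, ENNReal.ofReal ((v x - v y) ^ 2 / ‖x - y‖ ^ e)) + 2 * ‖v x‖ₑ * L) :=
        setLIntegral_mono' hΩ hpt
    _ ≤ ENNReal.ofReal (ρ ^ e) * gagliardoSq σ Ω v + 2 * L * L := by
        rw [gagliardoSq, lintegral_add_right' _ ((hv.enorm.const_mul _).mul_const _).restrict,
          lintegral_const_mul' _ _ ofReal_ne_top,
          lintegral_mul_const'' _ (hv.enorm.const_mul _).restrict,
          lintegral_const_mul'' _ hv.enorm.restrict]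
        gcongr
    _ = _ := by ring

section energyQ

variable {N : ℕ} {r s c αs αr αc : ℝ} {Ωs Ωr : Set (EuclideanSpace ℝ (Fin N))}
  {v : EuclideanSpace ℝ (Fin N) → ℝ}

theorem gagliardoSq_le_energyQ_left (hαs : 0 < αs) :
    gagliardoSq s Ωs v ≤ ENNReal.ofReal (αs / 4)⁻¹ * energyQ r s c αs αr αc Ωs Ωr v :=
  le_ofReal_inv_mul_of_ofReal_mul_le (by positivity) (le_self_add.trans le_self_add)

theorem gagliardoSq_le_energyQ_right (hαr : 0 < αr) :
    gagliardoSq r Ωr v ≤ ENNReal.ofReal (αr / 4)⁻¹ * energyQ r s c αs αr αc Ωs Ωr v :=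
  le_ofReal_inv_mul_of_ofReal_mul_le (by positivity) (le_add_self.trans le_self_add)

theorem mul_eLpNorm_sq_le_energyQ (hr : 0 ≤ r) (hs : 0 ≤ s) (hαs : 0 < αs) (hαr : 0 < αr)
    (hΩs : IsOpen Ωs) (hnull : volume (closure Ωs \ Ωs) = 0) {ρ : ℝ} (hρ : 0 < ρ) (hρ1 : ρ ≤ 1)
    {K : ℝ≥0∞} (hKs : ∀ x ∈ Ωs, K ≤ volume (Ωs ∩ ball x ρ))
    (hKr : ∀ x ∈ (closure Ωs)ᶜ, K ≤ volume ((closure Ωs)ᶜ ∩ ball x ρ)) (hv : AEMeasurable v) :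
    K * eLpNorm v 2 volume ^ (2 : ℝ) ≤
      ENNReal.ofReal (((αs / 4)⁻¹ + (αr / 4)⁻¹) * ρ ^ ((N : ℝ) + 2 * min r s)) *
          energyQ r s c αs αr αc Ωs (closure Ωs)ᶜ v +
        ENNReal.ofReal 4 * eLpNorm v 1 volume ^ (2 : ℝ) := by
  have hρ_mono : ∀ σ, min r s ≤ σ →
      ENNReal.ofReal (ρ ^ ((N : ℝ) + 2 * σ)) ≤ ENNReal.ofReal (ρ ^ ((N : ℝ) + 2 * min r s)) :=
    fun σ hσ => ofReal_le_ofReal (Real.rpow_le_rpow_of_exponent_ge hρ hρ1 (by linarith))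
  calc K * eLpNorm v 2 volume ^ (2 : ℝ)
      = K * (∫⁻ x in Ωs, ENNReal.ofReal (v x ^ 2)) +
          K * ∫⁻ x in (closure Ωs)ᶜ, ENNReal.ofReal (v x ^ 2) := by
        rw [eLpNorm_two_rpow_two, lintegral_eq_setLIntegral_add_compl_closure hnull, mul_add]
    _ ≤ (ENNReal.ofReal (ρ ^ ((N : ℝ) + 2 * s)) * gagliardoSq s Ωs v +
            2 * eLpNorm v 1 volume ^ 2) +
          (ENNReal.ofReal (ρ ^ ((N : ℝ) + 2 * r)) * gagliardoSq r (closure Ωs)ᶜ v +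
            2 * eLpNorm v 1 volume ^ 2) :=
        add_le_add (mul_setLIntegral_sq_le_gagliardoSq hΩs.measurableSet hs hKs hv)
          (mul_setLIntegral_sq_le_gagliardoSq isClosed_closure.isOpen_compl.measurableSet hr hKr hv)
    _ ≤ (ENNReal.ofReal (ρ ^ ((N : ℝ) + 2 * min r s)) *
            (ENNReal.ofReal (αs / 4)⁻¹ * energyQ r s c αs αr αc Ωs (closure Ωs)ᶜ v) +
            2 * eLpNorm v 1 volume ^ 2) +
          (ENNReal.ofReal (ρ ^ ((N : ℝ) + 2 * min r s)) *
            (ENNReal.ofReal (αr / 4)⁻¹ * energyQ r s c αs αr αc Ωs (closure Ωs)ᶜ v) +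
            2 * eLpNorm v 1 volume ^ 2) := by
        gcongr ?_ + _ + (?_ + _)
        · exact mul_le_mul' (hρ_mono s (min_le_right r s)) (gagliardoSq_le_energyQ_left hαs)
        · exact mul_le_mul' (hρ_mono r (min_le_left r s)) (gagliardoSq_le_energyQ_right hαr)
    _ = _ := by
        rw [ofReal_mul (by positivity), ofReal_add (by positivity) (by positivity),
          ENNReal.rpow_two, ofReal_ofNat]
        ring

end energyQ

theorem nash_coupled_energy_general (N : ℕ) (hN : 2 ≤ N) (r s c : ℝ)
    (hr : r ∈ Set.Ioo (0 : ℝ) 1) (hs : s ∈ Set.Ioo (0 : ℝ) 1)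
    (αs αr αc : ℝ) (hαs : 0 < αs) (hαr : 0 < αr)
    (Ωs Ωr : Set (EuclideanSpace ℝ (Fin N))) (hΩs : IsOpen Ωs)
    (hΩr : Ωr = (closure Ωs)ᶜ)
    (CΩs : ℝ) (hCΩs : 0 < CΩs)
    (hdensity_s : ∀ x ∈ Ωs, ∀ ρ : ℝ, 0 < ρ → ρ ≤ 1 →
      ENNReal.ofReal (CΩs * ρ ^ N) ≤ volume (Ωs ∩ Metric.ball x ρ))
    (CΩr : ℝ) (hCΩr : 0 < CΩr)
    (hdensity_r : ∀ x ∈ Ωr, ∀ ρ : ℝ, 0 < ρ →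
      ENNReal.ofReal (CΩr * ρ ^ N) ≤ volume (Ωr ∩ Metric.ball x ρ)) :
    ∃ C : ℝ, 0 < C ∧ ∀ v : EuclideanSpace ℝ (Fin N) → ℝ,
      MemLp v 1 volume → MemLp v 2 volume →
      energyQ r s c αs αr αc Ωs Ωr v ≠ ⊤ →
      eLpNorm v 2 volume ^ (2 + 4 * min r s / (N : ℝ)) ≤
        ENNReal.ofReal C * eLpNorm v 1 volume ^ (4 * min r s / (N : ℝ)) *
          (eLpNorm v 2 volume ^ (2 : ℝ) + energyQ r s c αs αr αc Ωs Ωr v) := by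
  subst hΩr
  have hN0 : (0 : ℝ) < N := by exact_mod_cast (by omega : 0 < N)
  have hα : 0 < min r s := lt_min hr.1 hs.1
  have hC : 0 < min CΩs CΩr := lt_min hCΩs hCΩr
  have hnull := measure_closure_diff_eq_zero_of_density volume hΩs.measurableSet hCΩs
    (by simpa using hdensity_s)
  refine ⟨(2 * 4 / min CΩs CΩr) ^ (2 * min r s / N) *
    max 1 (2 * ((αs / 4)⁻¹ + (αr / 4)⁻¹) / min CΩs CΩr), by positivity, fun v hv1 hv2 hQ => ?_⟩
  by_cases hL0 : eLpNorm v 1 volume = 0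
  · have h2 : eLpNorm v 2 volume = 0 := (eLpNorm_eq_zero_iff hv2.1 two_ne_zero).2
      ((eLpNorm_eq_zero_iff hv1.1 one_ne_zero).1 hL0)
    rw [h2, ENNReal.zero_rpow_of_pos (by positivity)]
    exact bot_le
  have hK : ∀ ρ : ℝ, 0 < ρ → ∀ C', min CΩs CΩr ≤ C' →
      ENNReal.ofReal (min CΩs CΩr * ρ ^ (N : ℝ)) ≤ ENNReal.ofReal (C' * ρ ^ N) := fun ρ hρ C' h' =>
    ofReal_le_ofReal (by rw [Real.rpow_natCast]; gcongr)
  rw [show (2 : ℝ) + 4 * min r s / N = 2 * (1 + 2 * min r s / N) by ring,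
    show 4 * min r s / (N : ℝ) = 2 * (2 * min r s / N) by ring, ENNReal.rpow_mul, ENNReal.rpow_mul]
  refine ENNReal.rpow_one_add_le_of_forall_scale hN0 (by positivity) hC (by positivity) four_pos
    (rpow_ne_top_of_nonneg zero_le_two hv2.eLpNorm_ne_top)
    (rpow_ne_top_of_nonneg zero_le_two hv1.eLpNorm_ne_top)
    (ENNReal.rpow_pos (pos_iff_ne_zero.2 hL0) hv1.eLpNorm_ne_top).ne' hQ fun ρ hρ hρ1 => ?_
  exact mul_eLpNorm_sq_le_energyQ hr.1.le hs.1.le hαs hαr hΩs hnull hρ hρ1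
    (fun x hx => (hK ρ hρ _ (min_le_left _ _)).trans (hdensity_s x hx ρ hρ hρ1))
    (fun x hx => (hK ρ hρ _ (min_le_right _ _)).trans (hdensity_r x hx ρ hρ)) hv2.aemeasurable

/-- Nash-type inequality with exponent `α = min{r,s}` for the coupled energy. -/
theorem nash_coupled_energy (N : ℕ) (hN : 2 ≤ N) (r s c : ℝ)
    (hr : r ∈ Set.Ioo (0 : ℝ) 1) (hs : s ∈ Set.Ioo (0 : ℝ) 1) (hc : c ∈ Set.Ioo (0 : ℝ) 1)
    (αs αr αc : ℝ) (hαs : 0 < αs) (hαr : 0 < αr) (hαc : 0 < αc)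
    (Ωs Ωr : Set (EuclideanSpace ℝ (Fin N))) (hne : Ωs.Nonempty) (hΩs : IsOpen Ωs)
    (hbdd : Bornology.IsBounded Ωs) (hΩr : Ωr = (closure Ωs)ᶜ)
    (CΩs : ℝ) (hCΩs : 0 < CΩs)
    (hdensity_s : ∀ x ∈ Ωs, ∀ ρ : ℝ, 0 < ρ → ρ ≤ 1 →
      ENNReal.ofReal (CΩs * ρ ^ N) ≤ volume (Ωs ∩ Metric.ball x ρ))
    (CΩr : ℝ) (hCΩr : 0 < CΩr)
    (hdensity_r : ∀ x ∈ Ωr, ∀ ρ : ℝ, 0 < ρ →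
      ENNReal.ofReal (CΩr * ρ ^ N) ≤ volume (Ωr ∩ Metric.ball x ρ)) :
    ∃ C : ℝ, 0 < C ∧ ∀ v : EuclideanSpace ℝ (Fin N) → ℝ,
      MemLp v 1 volume → MemLp v 2 volume →
      energyQ r s c αs αr αc Ωs Ωr v ≠ ⊤ →
      eLpNorm v 2 volume ^ (2 + 4 * min r s / (N : ℝ)) ≤
        ENNReal.ofReal C * eLpNorm v 1 volume ^ (4 * min r s / (N : ℝ)) *
          (eLpNorm v 2 volume ^ (2 : ℝ) + energyQ r s c αs αr αc Ωs Ωr v) :=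
  nash_coupled_energy_general N hN r s c hr hs αs αr αc hαs hαr Ωs Ωr hΩs hΩr CΩs hCΩs hdensity_s
    CΩr hCΩr hdensity_r
end

section
/- Let N ≥ 1, s, c ∈ (0,1), α_s, α_r, α_c > 0. Let Ω_s, Ω_r ⊂ ℝ^N be disjoint nonempty open sets, let x₀ ∈ Ω_s and d = dist(x₀, Ω_r) > 0, and let 0 < ε < d/2 be such that B_ε(x₀) ⊂ Ω_s. Let φ ∈ C_c^∞(ℝ^N) be supported in the unit ball B_1(0), and set φ_ε(x) = φ((x − x₀)/ε). Then there exists a constant C > 0 depending only on N, s, c, d, α_s, α_c (and not on ε) such that Q(φ_ε) ≤ C ( ε^{N−2s} [φ]_{s,ℝ^N}² + ε^N ∫_{ℝ^N} φ(x)² dx ). -/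
open MeasureTheory ENNReal

section Aux

variable {N : ℕ}

local notation "E" => EuclideanSpace ℝ (Fin N)

/-- Change of variables `x ↦ x₀ + ε • u` for the Lebesgue integral. -/
lemma lintegral_shift_smul (x₀ : E) {ε : ℝ} (hε : 0 < ε) (F : E → ℝ≥0∞) :
    ∫⁻ x, F (ε⁻¹ • (x - x₀)) = ENNReal.ofReal (ε ^ (N : ℝ)) * ∫⁻ u, F u := by
  have h1 : ∫⁻ x, F (ε⁻¹ • (x - x₀)) = ∫⁻ x, F (ε⁻¹ • x) :=
    lintegral_sub_right_eq_self (fun x => F (ε⁻¹ • x)) x₀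
  rw [h1]
  have hne : (ε⁻¹ : ℝ) ≠ 0 := inv_ne_zero hε.ne'
  let e : E ≃ᵐ E := (Homeomorph.smulOfNeZero (ε⁻¹ : ℝ) hne).toMeasurableEquiv
  have hcoe : ⇑e = fun x : E => (ε⁻¹ : ℝ) • x := rfl
  have h2 : ∫⁻ x, F (ε⁻¹ • x) = ∫⁻ x, F x ∂(Measure.map (fun x : E => (ε⁻¹ : ℝ) • x) volume) := by
    rw [← hcoe, lintegral_map_equiv F e, hcoe]
  rw [h2, Measure.map_addHaar_smul volume hne, lintegral_smul_measure]
  congr 1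
  rw [finrank_euclideanSpace_fin, abs_of_nonneg (by positivity : (0:ℝ) ≤ (ε⁻¹ ^ N)⁻¹),
    inv_pow, inv_inv, Real.rpow_natCast]

/-- Scaling identity for the Gagliardo seminorm of the rescaled bump. -/
lemma gagliardo_scale (s : ℝ) (x₀ : E) {ε : ℝ} (hε : 0 < ε) (φ : E → ℝ) :
    gagliardoSq s Set.univ (fun x => φ (ε⁻¹ • (x - x₀))) =
      ENNReal.ofReal (ε ^ ((N : ℝ) - 2 * s)) * gagliardoSq s Set.univ φ := by
  set p : ℝ := (N : ℝ) + 2 * s with hp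
  set v : E → ℝ := fun x => φ (ε⁻¹ • (x - x₀)) with hv
  have hεne : (ε : ℝ) ≠ 0 := hε.ne'
  have key : ∀ x y : E, x₀ + ε • (ε⁻¹ • (x - x₀)) = x := by
    intro x y; rw [smul_inv_smul₀ hεne, add_sub_cancel]
  unfold gagliardoSq
  simp_rw [Measure.restrict_univ]
  have step1 : ∀ x : E, ∫⁻ y, ENNReal.ofReal ((v x - v y) ^ 2 / ‖x - y‖ ^ p) =
      ENNReal.ofReal (ε ^ (N : ℝ)) *
        ∫⁻ w, ENNReal.ofReal ((v x - φ w) ^ 2 / ‖x - (x₀ + ε • w)‖ ^ p) := by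
    intro x
    rw [← lintegral_shift_smul x₀ hε
      (fun w => ENNReal.ofReal ((v x - φ w) ^ 2 / ‖x - (x₀ + ε • w)‖ ^ p))]
    congr 1 with y
    rw [key y x]
  simp_rw [← hp, step1]
  rw [lintegral_const_mul' _ _ ENNReal.ofReal_ne_top]
  have step2 : ∫⁻ x, ∫⁻ w, ENNReal.ofReal ((v x - φ w) ^ 2 / ‖x - (x₀ + ε • w)‖ ^ p) =
      ENNReal.ofReal (ε ^ (N : ℝ)) *
        ∫⁻ u, ∫⁻ w, ENNReal.ofReal ((φ u - φ w) ^ 2 / ‖ε • (u - w)‖ ^ p) := by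
    rw [← lintegral_shift_smul x₀ hε
      (fun u => ∫⁻ w, ENNReal.ofReal ((φ u - φ w) ^ 2 / ‖ε • (u - w)‖ ^ p))]
    congr 1 with x
    congr 1 with w
    congr 2
    rw [smul_sub, smul_inv_smul₀ hεne]
    congr 1
    abel
  rw [step2]
  have step3 : ∀ u w : E, ENNReal.ofReal ((φ u - φ w) ^ 2 / ‖ε • (u - w)‖ ^ p) =
      ENNReal.ofReal (ε ^ (-p)) * ENNReal.ofReal ((φ u - φ w) ^ 2 / ‖u - w‖ ^ p) := by
    intro u w
    rw [← ENNReal.ofReal_mul (by positivity)]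
    congr 1
    rw [norm_smul, Real.norm_eq_abs, abs_of_pos hε,
      Real.mul_rpow hε.le (norm_nonneg _), Real.rpow_neg hε.le]
    rw [div_eq_mul_inv, mul_inv, div_eq_mul_inv]
    ring
  simp_rw [step3, lintegral_const_mul' (ENNReal.ofReal (ε ^ (-p))) _ ENNReal.ofReal_ne_top]
  rw [← mul_assoc, ← mul_assoc, ← ENNReal.ofReal_mul (by positivity),
    ← ENNReal.ofReal_mul (by positivity), ← Real.rpow_add hε, ← Real.rpow_add hε]
  congr 2
  rw [hp]
  ring

/-- Finiteness of the tail integral of the coupling kernel. -/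
lemma tail_lt_top (c d : ℝ) (hc : 0 < c) (hd : 0 < d) :
    (∫⁻ z : E in {z : E | d / 2 ≤ ‖z‖}, ENNReal.ofReal (‖z‖ ^ (-((N : ℝ) + 2 * c)))) < ⊤ := by
  set p : ℝ := (N : ℝ) + 2 * c with hp
  have hp0 : 0 < p := by positivity
  set K : ℝ := (1 + 2 / d) ^ p with hK
  have hK0 : 0 < K := by positivity
  have hmeas : MeasurableSet {z : E | d / 2 ≤ ‖z‖} :=
    (isClosed_le continuous_const continuous_norm).measurableSet
  have hpt : ∀ z : E, z ∈ {z : E | d / 2 ≤ ‖z‖} →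
      ENNReal.ofReal (‖z‖ ^ (-p)) ≤ ENNReal.ofReal (K * (1 + ‖z‖) ^ (-p)) := by
    intro z hz
    simp only [Set.mem_setOf_eq] at hz
    have hz0 : 0 < ‖z‖ := lt_of_lt_of_le (by positivity) hz
    apply ENNReal.ofReal_le_ofReal
    have h1 : 1 + ‖z‖ ≤ (1 + 2 / d) * ‖z‖ := by
      have : 1 ≤ 2 / d * ‖z‖ := by
        rw [div_mul_eq_mul_div, le_div_iff₀ hd]
        linarith
      nlinarith
    have h2 : (1 + ‖z‖) ^ p ≤ K * ‖z‖ ^ p := by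
      rw [hK, ← Real.mul_rpow (by positivity) hz0.le]
      exact Real.rpow_le_rpow (by positivity) h1 hp0.le
    have ha : 0 < ‖z‖ ^ p := Real.rpow_pos_of_pos hz0 p
    have hb : 0 < (1 + ‖z‖) ^ p := Real.rpow_pos_of_pos (by positivity) p
    rw [Real.rpow_neg hz0.le, Real.rpow_neg (by positivity), inv_eq_one_div, div_le_iff₀ ha]
    have heq : K * ((1 + ‖z‖) ^ p)⁻¹ * ‖z‖ ^ p = K * ‖z‖ ^ p / (1 + ‖z‖) ^ p := by ring
    rw [heq, le_div_iff₀ hb]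
    linarith
  calc (∫⁻ z : E in {z : E | d / 2 ≤ ‖z‖}, ENNReal.ofReal (‖z‖ ^ (-p)))
      ≤ ∫⁻ z : E in {z : E | d / 2 ≤ ‖z‖}, ENNReal.ofReal (K * (1 + ‖z‖) ^ (-p)) :=
        setLIntegral_mono' hmeas hpt
    _ ≤ ∫⁻ z : E, ENNReal.ofReal (K * (1 + ‖z‖) ^ (-p)) := setLIntegral_le_lintegral _ _
    _ = ENNReal.ofReal K * ∫⁻ z : E, ENNReal.ofReal ((1 + ‖z‖) ^ (-p)) := by
        simp_rw [ENNReal.ofReal_mul hK0.le]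
        exact lintegral_const_mul' _ _ ENNReal.ofReal_ne_top
    _ < ⊤ := by
        apply ENNReal.mul_lt_top ENNReal.ofReal_lt_top
        apply finite_integral_one_add_norm
        rw [finrank_euclideanSpace_fin]
        linarith

/-- Translation invariance of the tail integral. -/
lemma tail_translate (x : E) (a p : ℝ) :
    ∫⁻ y : E in {y : E | a ≤ ‖y - x‖}, ENNReal.ofReal (‖y - x‖ ^ (-p)) =
      ∫⁻ z : E in {z : E | a ≤ ‖z‖}, ENNReal.ofReal (‖z‖ ^ (-p)) := by
  set g : E → ℝ≥0∞ :=
    Set.indicator {z : E | a ≤ ‖z‖} (fun z => ENNReal.ofReal (‖z‖ ^ (-p))) with hg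
  have hS : MeasurableSet {z : E | a ≤ ‖z‖} :=
    (isClosed_le continuous_const continuous_norm).measurableSet
  have hSx : MeasurableSet {y : E | a ≤ ‖y - x‖} :=
    (isClosed_le continuous_const ((continuous_id.sub continuous_const).norm)).measurableSet
  rw [← lintegral_indicator hS, ← lintegral_indicator hSx]
  have : (Set.indicator {y : E | a ≤ ‖y - x‖}
      (fun y => ENNReal.ofReal (‖y - x‖ ^ (-p)))) = fun y => g (y - x) := by
    funext y
    by_cases h : a ≤ ‖y - x‖ <;> simp [hg, Set.indicator, h]
  rw [this]
  exact lintegral_sub_right_eq_self g x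

end Aux

/-- Energy bound for the rescaled bump `φ_ε(x) = φ((x - x₀)/ε)` centered at an interior point
`x₀` of `Ω_s` at distance `d` from `Ω_r`. -/
theorem energy_of_rescaled_bump (N : ℕ) (hN : 1 ≤ N) (r s c : ℝ)
    (hr : r ∈ Set.Ioo (0 : ℝ) 1) (hs : s ∈ Set.Ioo (0 : ℝ) 1) (hc : c ∈ Set.Ioo (0 : ℝ) 1)
    (αs αr αc : ℝ) (hαs : 0 < αs) (hαr : 0 < αr) (hαc : 0 < αc)
    (Ωs Ωr : Set (EuclideanSpace ℝ (Fin N))) (hnes : Ωs.Nonempty) (hner : Ωr.Nonempty)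
    (hΩs : IsOpen Ωs) (hΩr : IsOpen Ωr) (hdisj : Disjoint Ωs Ωr)
    (x₀ : EuclideanSpace ℝ (Fin N)) (hx₀ : x₀ ∈ Ωs)
    (d : ℝ) (hd : d = Metric.infDist x₀ Ωr) (hd0 : 0 < d) :
    ∃ C : ℝ, 0 < C ∧ ∀ φ : EuclideanSpace ℝ (Fin N) → ℝ,
      ContDiff ℝ (⊤ : ℕ∞) φ → Function.support φ ⊆ Metric.ball 0 1 →
      ∀ ε : ℝ, 0 < ε → ε < d / 2 → Metric.ball x₀ ε ⊆ Ωs →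
      energyQ r s c αs αr αc Ωs Ωr (fun x => φ (ε⁻¹ • (x - x₀))) ≤
        ENNReal.ofReal C *
          (ENNReal.ofReal (ε ^ ((N : ℝ) - 2 * s)) * gagliardoSq s Set.univ φ +
            ENNReal.ofReal (ε ^ (N : ℝ)) * ENNReal.ofReal (∫ x, (φ x) ^ 2)) := by
  classical
  set T : ℝ≥0∞ := ∫⁻ z : EuclideanSpace ℝ (Fin N) in {z | d / 2 ≤ ‖z‖},
      ENNReal.ofReal (‖z‖ ^ (-((N : ℝ) + 2 * c))) with hT
  have hTlt : T < ⊤ := tail_lt_top c d hc.1 hd0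
  have hTnn : (0 : ℝ) ≤ T.toReal := ENNReal.toReal_nonneg
  refine ⟨αs / 4 + αc / 2 * (T.toReal + 1), by positivity, ?_⟩
  intro φ hφ hsupp ε hε hεd hball
  set C : ℝ := αs / 4 + αc / 2 * (T.toReal + 1) with hC
  set v : EuclideanSpace ℝ (Fin N) → ℝ := fun x => φ (ε⁻¹ • (x - x₀)) with hv
  have hφc : Continuous φ := hφ.continuous
  have hvsupp : ∀ x, v x ≠ 0 → ‖x - x₀‖ < ε := by
    intro x hx
    have h1 := hsupp (Function.mem_support.mpr hx)
    rw [Metric.mem_ball, dist_zero_right, norm_smul, norm_inv, Real.norm_eq_abs,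
      abs_of_pos hε] at h1
    have h2 : ε * (ε⁻¹ * ‖x - x₀‖) < ε * 1 := (mul_lt_mul_iff_right₀ hε).mpr h1
    rwa [← mul_assoc, mul_inv_cancel₀ hε.ne', one_mul, mul_one] at h2
  have hvr : ∀ y ∈ Ωr, v y = 0 := by
    intro y hy
    by_contra hne
    have hyb : y ∈ Metric.ball x₀ ε := by
      rw [Metric.mem_ball, dist_eq_norm]
      exact hvsupp y hne
    exact Set.disjoint_left.mp hdisj (hball hyb) hy
  -- the `r`-term vanishes
  have hGr : gagliardoSq r Ωr v = 0 := by
    have h0 : ∀ x ∈ Ωr, (∫⁻ y in Ωr,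
        ENNReal.ofReal ((v x - v y) ^ 2 / ‖x - y‖ ^ ((N : ℝ) + 2 * r))) = 0 := by
      intro x hx
      have hz : ∀ y ∈ Ωr,
          ENNReal.ofReal ((v x - v y) ^ 2 / ‖x - y‖ ^ ((N : ℝ) + 2 * r)) = 0 := by
        intro y hy
        rw [hvr x hx, hvr y hy]
        simp
      rw [setLIntegral_congr_fun hΩr.measurableSet hz]
      simp
    unfold gagliardoSq
    rw [setLIntegral_congr_fun hΩr.measurableSet h0]
    simp
  -- the `s`-term
  have hGs : gagliardoSq s Ωs v ≤
      ENNReal.ofReal (ε ^ ((N : ℝ) - 2 * s)) * gagliardoSq s Set.univ φ := by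
    rw [← gagliardo_scale s x₀ hε φ]
    unfold gagliardoSq
    calc (∫⁻ x in Ωs, ∫⁻ y in Ωs,
          ENNReal.ofReal ((v x - v y) ^ 2 / ‖x - y‖ ^ ((N : ℝ) + 2 * s)))
        ≤ ∫⁻ x in Ωs, ∫⁻ y in Set.univ,
          ENNReal.ofReal ((v x - v y) ^ 2 / ‖x - y‖ ^ ((N : ℝ) + 2 * s)) :=
          lintegral_mono fun x => lintegral_mono_set (Set.subset_univ _)
      _ ≤ ∫⁻ x in Set.univ, ∫⁻ y in Set.univ,
          ENNReal.ofReal ((v x - v y) ^ 2 / ‖x - y‖ ^ ((N : ℝ) + 2 * s)) :=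
          lintegral_mono_set (Set.subset_univ _)
  -- square integrability of φ
  have hcs : HasCompactSupport (fun x : EuclideanSpace ℝ (Fin N) => (φ x) ^ 2) := by
    apply HasCompactSupport.intro (isCompact_closedBall (0 : EuclideanSpace ℝ (Fin N)) 1)
    intro x hx
    have hx0 : φ x = 0 := by
      by_contra h
      exact hx (Metric.ball_subset_closedBall (hsupp (Function.mem_support.mpr h)))
    simp [hx0]
  have hφ2i : Integrable (fun x : EuclideanSpace ℝ (Fin N) => (φ x) ^ 2) :=
    (hφc.pow 2).integrable_of_hasCompactSupport hcs
  have hint : (∫⁻ u, ENNReal.ofReal ((φ u) ^ 2)) = ENNReal.ofReal (∫ x, (φ x) ^ 2) :=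
    (ofReal_integral_eq_lintegral_ofReal hφ2i (ae_of_all _ fun x => sq_nonneg (φ x))).symm
  -- the cross term
  have hcross : crossTerm c Ωs Ωr v ≤
      T * (ENNReal.ofReal (ε ^ (N : ℝ)) * ENNReal.ofReal (∫ x, (φ x) ^ 2)) := by
    have hinner : ∀ x, (∫⁻ y in Ωr,
        ENNReal.ofReal ((v x - v y) ^ 2 / ‖x - y‖ ^ ((N : ℝ) + 2 * c))) ≤
        ENNReal.ofReal ((v x) ^ 2) * T := by
      intro x
      have hcong : ∀ y ∈ Ωr,
          ENNReal.ofReal ((v x - v y) ^ 2 / ‖x - y‖ ^ ((N : ℝ) + 2 * c)) =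
          ENNReal.ofReal ((v x) ^ 2) *
            ENNReal.ofReal (‖y - x‖ ^ (-((N : ℝ) + 2 * c))) := by
        intro y hy
        rw [hvr y hy, sub_zero, norm_sub_rev x y, Real.rpow_neg (norm_nonneg _),
          ← ENNReal.ofReal_mul (by positivity), div_eq_mul_inv]
      rw [setLIntegral_congr_fun hΩr.measurableSet hcong,
        lintegral_const_mul' _ _ ENNReal.ofReal_ne_top]
      by_cases hx : v x = 0
      · simp [hx]
      · apply mul_le_mul_right
        have hsub : Ωr ⊆ {y | d / 2 ≤ ‖y - x‖} := by
          intro y hy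
          have h1 : d ≤ dist x₀ y := hd ▸ Metric.infDist_le_dist_of_mem hy
          have h2 : ‖x - x₀‖ < ε := hvsupp x hx
          have h3 : dist x₀ y ≤ dist x₀ x + dist x y := dist_triangle _ _ _
          have h4 : dist x₀ x = ‖x - x₀‖ := by rw [dist_comm, dist_eq_norm]
          have h5 : dist x y = ‖y - x‖ := by rw [dist_comm, dist_eq_norm]
          simp only [Set.mem_setOf_eq]
          linarith
        calc (∫⁻ y in Ωr, ENNReal.ofReal (‖y - x‖ ^ (-((N : ℝ) + 2 * c))))
            ≤ ∫⁻ y in {y | d / 2 ≤ ‖y - x‖},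
              ENNReal.ofReal (‖y - x‖ ^ (-((N : ℝ) + 2 * c))) :=
              lintegral_mono_set hsub
          _ = T := (tail_translate x (d / 2) ((N : ℝ) + 2 * c)).trans hT.symm
    have hbig : crossTerm c Ωs Ωr v ≤ ∫⁻ x in Ωs, ENNReal.ofReal ((v x) ^ 2) * T :=
      lintegral_mono fun x => hinner x
    refine hbig.trans ?_
    rw [lintegral_mul_const' T _ hTlt.ne]
    have hle2 : (∫⁻ x in Ωs, ENNReal.ofReal ((v x) ^ 2)) ≤
        ENNReal.ofReal (ε ^ (N : ℝ)) * ENNReal.ofReal (∫ x, (φ x) ^ 2) := by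
      refine (setLIntegral_le_lintegral _ _).trans (le_of_eq ?_)
      rw [← hint]
      exact lintegral_shift_smul x₀ hε (fun u => ENNReal.ofReal ((φ u) ^ 2))
    exact le_trans (mul_le_mul_left hle2 T) (le_of_eq (mul_comm _ _))
  -- assemble
  unfold energyQ
  rw [hGr, mul_zero, add_zero]
  have h1 : ENNReal.ofReal (αs / 4) * gagliardoSq s Ωs v ≤
      ENNReal.ofReal C * (ENNReal.ofReal (ε ^ ((N : ℝ) - 2 * s)) * gagliardoSq s Set.univ φ) :=
    mul_le_mul' (ENNReal.ofReal_le_ofReal (by nlinarith)) hGs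
  have h2 : ENNReal.ofReal (αc / 2) * crossTerm c Ωs Ωr v ≤
      ENNReal.ofReal C * (ENNReal.ofReal (ε ^ (N : ℝ)) * ENNReal.ofReal (∫ x, (φ x) ^ 2)) := by
    refine le_trans (mul_le_mul_right hcross _) ?_
    rw [← mul_assoc]
    refine mul_le_mul_left ?_ _
    rw [← ENNReal.ofReal_toReal hTlt.ne, ← ENNReal.ofReal_mul (by positivity)]
    exact ENNReal.ofReal_le_ofReal (by nlinarith)
  exact le_trans (add_le_add h1 h2) (le_of_eq (mul_add _ _ _).symm)
end
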